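/- arXiv:1909.11336 — 12 statements merged into one kernel-verified Lean document; each statement's English description precedes it below -/
import Mathlib

section
/- If a string T has a cover C and a border B such that |C| ≤ |B|, then C is also a cover of B. -/
/-!
STATEMENT 1: If a string `T` has a cover `C` and a border `B` such that
`|C| ≤ |B|`, then `C` is also a cover of `B`.
Strings are modelled as lists; positions are 0-based.
-/

variable {α : Type*}

/-- `i` is a (0-based) starting position of an occurrence of `C` in `T`. -/
def IsOcc (T C : List α) (i : ℕ) : Prop :=
  i + C.length ≤ T.length ∧ (T.drop i).take C.length = C

/-- Position `p` (0-based) of `T` lies within an occurrence of `C` in `T`. -/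
def CoveredPos (T C : List α) (p : ℕ) : Prop :=
  ∃ i, IsOcc T C i ∧ i ≤ p ∧ p < i + C.length

/-- `C` is a cover of `T`: `C` fits into `T` and every position of `T`
lies within an occurrence of `C`. -/
def IsCover (C T : List α) : Prop :=
  C.length ≤ T.length ∧ ∀ p, p < T.length → CoveredPos T C p

/-- `B` is a border of `T`: `B` is both a prefix and a suffix of `T`. -/
def IsBorder (B T : List α) : Prop :=
  B <+: T ∧ B <:+ T


/-!
If the occurrence of `C` covering a position of `B` sticks out past the end of `B`, then `C`
reaches the end of `T`, so `C` is a suffix of `T`; being at most as long as the suffix `B`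
of `T`, it is then a suffix of `B`, and its occurrence at the end of `B` covers the position.
-/

namespace IsOcc

variable {T C : List α} {i : ℕ}

theorem of_prefix {B : List α} (h : IsOcc T C i) (hBT : B <+: T)
    (hi : i + C.length ≤ B.length) : IsOcc B C i := by
  obtain ⟨s, rfl⟩ := hBT
  have hocc := h.2
  rw [List.drop_append_of_le_length (by omega),
    List.take_append_of_le_length (by rw [List.length_drop]; omega)] at hocc
  exact ⟨hi, hocc⟩

theorem suffix_of_add_length_eq (h : IsOcc T C i) (hi : i + C.length = T.length) : C <:+ T := by
  have hdrop : T.drop i = C :=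
    (List.take_of_length_le (by rw [List.length_drop]; omega)).symm.trans h.2
  exact ⟨T.take i, by rw [← hdrop, List.take_append_drop]⟩

end IsOcc

theorem isOcc_of_suffix {T C : List α} (h : C <:+ T) : IsOcc T C (T.length - C.length) :=
  ⟨by have := h.length_le; omega,
    by rw [← List.suffix_iff_eq_drop.mp h, List.take_length]⟩

theorem IsCover.suffix {C T : List α} (h : IsCover C T) (hT : T ≠ []) : C <:+ T := by
  have hpos : 0 < T.length := List.length_pos_iff.mpr hT
  obtain ⟨i, hocc, hi, hlast⟩ := h.2 (T.length - 1) (by omega)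
  exact hocc.suffix_of_add_length_eq (by have := hocc.1; omega)

theorem cover_of_border (T C B : List α) (hC : IsCover C T) (hB : IsBorder B T)
    (hlen : C.length ≤ B.length) : IsCover C B := by
  refine ⟨hlen, fun p hp => ?_⟩
  obtain ⟨i, hocc, hip, hpi⟩ := hC.2 p (hp.trans_le hB.1.length_le)
  by_cases hfits : i + C.length ≤ B.length
  · exact ⟨i, hocc.of_prefix hB.1 hfits, hip, hpi⟩
  · have hT : T ≠ [] := List.ne_nil_of_length_pos (by have := hB.1.length_le; omega)
    have hCB : C <:+ B := List.suffix_of_suffix_length_le (hC.suffix hT) hB.2 hlen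
    exact ⟨_, isOcc_of_suffix hCB, by omega, by omega⟩
end

section
/- The shortest cover of a string is not periodic: if T is a nonempty string and C is a cover of T of minimum length, then 2·per(C) > |C|. -/
/-!
STATEMENT 2: The shortest cover of a string is not periodic: if `T` is a
nonempty string and `C` is a cover of `T` of minimum length, then
`2 · per(C) > |C|`, where `per(C)` is the smallest period of `C`.
Strings are modelled as lists; positions are 0-based.
-/

variable {α : Type*}

/-- `p` is a period of `T` (with `1 ≤ p ≤ |T|`):
`T[i] = T[i+p]` whenever both indices are valid. -/
def IsPeriod (T : List α) (p : ℕ) : Prop :=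
  1 ≤ p ∧ p ≤ T.length ∧ ∀ i, ∀ h : i + p < T.length,
    T[i]'(by omega) = T[i + p]'h

theorem shortest_cover_not_periodic (T C : List α) (hT : T ≠ [])
    (hC : IsCover C T) (hmin : ∀ C' : List α, IsCover C' T → C.length ≤ C'.length)
    (p : ℕ) (hp : IsLeast {q | IsPeriod C q} p) :
    C.length < 2 * p := by
  by_contra h
  push_neg at h
  obtain ⟨⟨hp1, hpn, hper⟩, _⟩ := hp
  set n := C.length with hn
  set C' := C.take (n - p) with hC'def
  have hlen' : C'.length = n - p := by
    rw [hC'def, List.length_take]; omega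
  -- the suffix of C starting at p equals the prefix of length n - p
  have hsuffix : C.drop p = C' := by
    apply List.ext_getElem
    · simp [hlen', ← hn]
    · intro j h1 h2
      have hj : j < n - p := by simpa [hlen'] using h2
      have hjp : j + p < n := by omega
      have := hper j hjp
      simp only [List.getElem_drop, hC'def, List.getElem_take]
      simp only [Nat.add_comm p j]
      exact this.symm
  have hCT := hC.1
  -- C' is a cover of T
  have hcov : IsCover C' T := by
    constructor
    · omega
    · intro q hq
      obtain ⟨i, ⟨hile, htake⟩, hiq, hqi⟩ := hC.2 q hq
      by_cases hcase : q < i + (n - p)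
      · refine ⟨i, ⟨by omega, ?_⟩, hiq, by omega⟩
        rw [hlen', hC'def, ← htake, List.take_take]
        congr 1; omega
      · refine ⟨i + p, ⟨by rw [hlen']; omega, ?_⟩, by omega, by rw [hlen']; omega⟩
        rw [hlen', ← hsuffix, ← htake, List.drop_take, List.drop_drop]
  have := hmin C' hcov
  rw [hlen'] at this
  omega
end

section
/- Let T be a string of length n, let B be the longest proper border of T, and suppose 3·|B| > 2n. Let p = n − |B|. Then p is a period of T, T has a border B' of length p + (n mod p), and |B'| < 2p ≤ 2n/3 (so in particular B' is not periodic with period p, since |B'| < 2p). -/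
/-!
STATEMENT 5: Let `T` be a string of length `n`, let `B` be the longest proper
border of `T`, and suppose `3·|B| > 2n`.  Let `p = n − |B|`.  Then `p` is a
period of `T`, `T` has a border `B'` of length `p + (n mod p)`, and
`|B'| < 2p ≤ 2n/3` (so in particular `B'` is not periodic with period `p`,
since `|B'| < 2p`).

Formalization note: the inequality `2p ≤ 2n/3` is stated as `3·(2·p) ≤ 2·n`
to avoid rounding in natural-number division.
-/

variable {α : Type*}

private lemma period_iter (T : List α) (p : ℕ)
    (h : ∀ i, ∀ hh : i + p < T.length, T[i]'(by omega) = T[i + p]'hh) :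
    ∀ k i, ∀ hk : i + k * p < T.length, T[i]'(by omega) = T[i + k * p]'hk := by
  intro k
  induction k with
  | zero => simp
  | succ k ih =>
    intro i hk
    have hm : (k + 1) * p = k * p + p := by ring
    have h1 : i + k * p < T.length := by omega
    have e1 := ih i h1
    have h2 : (i + k * p) + p < T.length := by omega
    have e2 := h (i + k * p) h2
    simp only [Nat.add_mul, Nat.one_mul, ← Nat.add_assoc]
    exact e1.trans e2

theorem long_border_gives_short_nonperiodic_border (T B : List α) (n : ℕ)
    (hn : n = T.length)
    (hB : IsBorder B T) (hBproper : B.length < n)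
    (hBmax : ∀ B'' : List α, IsBorder B'' T → B''.length < n → B''.length ≤ B.length)
    (hlong : 2 * n < 3 * B.length)
    (p : ℕ) (hp : p = n - B.length) :
    IsPeriod T p ∧
      ∃ B' : List α, IsBorder B' T ∧ B'.length = p + n % p ∧
        B'.length < 2 * p ∧ 3 * (2 * p) ≤ 2 * n := by
  obtain ⟨s, hs⟩ := hB.1
  obtain ⟨t, ht⟩ := hB.2
  have hBlen : B.length = n - p := by omega
  have hp1 : 1 ≤ p := by omega
  have htlen : t.length = p := by
    have := congrArg List.length ht
    simp at this
    omega
  have hpn : p ≤ n := by omega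
  -- the core period property
  have hper : ∀ i, ∀ h : i + p < T.length, T[i]'(by omega) = T[i + p]'h := by
    intro i hip
    have hiB : i < B.length := by omega
    have e1 : T[i]'(by omega) = B[i]'hiB := by
      rw [List.getElem_of_eq hs.symm]
      exact List.getElem_append_left hiB
    have e2 : T[i + p]'hip = B[i]'hiB := by
      rw [List.getElem_of_eq ht.symm, List.getElem_append_right (show t.length ≤ i + p by omega)]
      congr 1
      omega
    rw [e1, e2]
  have hperiod : IsPeriod T p := ⟨hp1, by omega, hper⟩
  refine ⟨hperiod, ?_⟩
  set ℓ := p + n % p with hl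
  have hmod : n % p < p := Nat.mod_lt _ hp1
  have hdiv : 1 ≤ n / p := Nat.one_le_div_iff hp1 |>.mpr hpn
  have hnp : n / p * p + n % p = n := by
    rw [Nat.mul_comm]; exact Nat.div_add_mod n p
  have hmul : p * 1 ≤ p * (n / p) := Nat.mul_le_mul_left p hdiv
  have hln : ℓ ≤ n := by
    rw [Nat.mul_comm] at hmul; omega
  have hc2 : (n / p - 1) * p = n / p * p - p := by
    rcases Nat.exists_eq_add_of_le hdiv with ⟨c, hc⟩
    rw [hc]
    have h1c : 1 + c - 1 = c := by omega
    rw [h1c, Nat.add_mul, Nat.one_mul, Nat.add_sub_cancel_left]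
  have hkey : n - ℓ = (n / p - 1) * p := by omega
  have hB'len : (T.take ℓ).length = ℓ := by
    simp; omega
  refine ⟨T.take ℓ, ⟨List.take_prefix _ _, ?_⟩, by omega, by omega, by omega⟩
  have heq : T.take ℓ = T.drop (n - ℓ) := by
    apply List.ext_getElem
    · simp; omega
    · intro i h1 h2
      have hi : i < ℓ := by omega
      simp only [List.getElem_take, List.getElem_drop]
      have hk : i + (n / p - 1) * p < T.length := by omega
      have e := period_iter T p hper (n / p - 1) i hk
      convert e using 2
      omega
  rw [heq]
  exact List.drop_suffix _ _
end

section
/- Let T be a nonempty string that has a nonempty proper border, let B be its longest nonempty proper border, and let C be the shortest cover of B. If C is a cover of T, then C is the shortest cover of T; if C is not a cover of T, then T is superprimitive, i.e., the shortest cover of T is T itself. -/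
/-!
A cover of `T` is a border of `T`, so a cover `C' ≠ T` is a nonempty proper border and thus no
longer than `B`; its occurrences inside the prefix and the suffix copy of `B` then cover `B`.
Hence every cover `C' ≠ T` of `T` covers `B`, so `|C| ≤ |C'|`, and `C`, being a shortest cover
of `B`, covers the border `C'` of `B`; by transitivity of covering, `C` covers `T`.
-/

variable {α : Type*}

theorem isOcc_zero_iff {T C : List α} : IsOcc T C 0 ↔ C <+: T := by
  rw [IsOcc, zero_add, List.drop_zero, List.prefix_iff_eq_take]
  exact ⟨fun h => h.2.symm, fun h => ⟨h ▸ List.length_take_le' _ _, h.symm⟩⟩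

theorem isOcc_append_left_iff {s T C : List α} {i : ℕ} :
    IsOcc (s ++ T) C (s.length + i) ↔ IsOcc T C i := by
  simp only [IsOcc, ← List.drop_drop, List.drop_left, List.length_append]
  constructor <;> rintro ⟨hlen, heq⟩ <;> exact ⟨by omega, heq⟩

theorem IsOcc.add {T C' C : List α} {j k : ℕ} (hj : IsOcc T C' j) (hk : IsOcc C' C k) :
    IsOcc T C (j + k) := by
  refine ⟨by linarith [hj.1, hk.1], ?_⟩
  have hk' := hk.2
  rw [← hj.2, List.drop_take, List.take_take, min_eq_left (by have := hk.1; omega)] at hk'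
  rwa [← List.drop_drop]

namespace IsCover

variable {C C' B T : List α}

theorem isPrefix (h : IsCover C T) : C <+: T := by
  rcases Nat.eq_zero_or_pos T.length with hT | hT
  · rw [List.eq_nil_of_length_eq_zero (by have := h.1; omega : C.length = 0)]
    exact List.nil_prefix
  · obtain ⟨i, hi, hi0, -⟩ := h.2 0 hT
    obtain rfl : i = 0 := by omega
    exact isOcc_zero_iff.mp hi

theorem isSuffix (h : IsCover C T) : C <:+ T := by
  rcases Nat.eq_zero_or_pos T.length with hT | hT
  · rw [List.eq_nil_of_length_eq_zero (by have := h.1; omega : C.length = 0)]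
    exact List.nil_suffix
  · obtain ⟨i, ⟨hlen, heq⟩, -, hlast⟩ := h.2 (T.length - 1) (by omega)
    have hdrop : C = T.drop i := by
      rw [← heq, List.take_of_length_le (by simp only [List.length_drop]; omega)]
    exact hdrop ▸ List.drop_suffix i T

theorem isBorder (h : IsCover C T) : IsBorder C T :=
  ⟨h.isPrefix, h.isSuffix⟩

theorem ne_nil (h : IsCover C T) (hT : T ≠ []) : C ≠ [] := by
  obtain ⟨i, -, hi0, hlt⟩ := h.2 0 (List.length_pos_iff.mpr hT)
  exact List.ne_nil_of_length_pos (by omega)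

theorem trans (hC : IsCover C C') (hC' : IsCover C' T) : IsCover C T := by
  refine ⟨hC.1.trans hC'.1, fun p hp => ?_⟩
  obtain ⟨j, hj, hjp, hpj⟩ := hC'.2 p hp
  obtain ⟨k, hk, hkp, hpk⟩ := hC.2 (p - j) (by omega)
  exact ⟨j + k, hj.add hk, by omega, by omega⟩

theorem of_isBorder (hC : IsCover C T) (hB : IsBorder B T) (hlen : C.length ≤ B.length) :
    IsCover C B := by
  refine ⟨hlen, fun p hp => ?_⟩
  by_cases hpC : p < C.length
  · have hCB : C <+: B := List.prefix_of_prefix_length_le hC.isPrefix hB.1 hlen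
    exact ⟨0, isOcc_zero_iff.mpr hCB, Nat.zero_le p, by omega⟩
  · obtain ⟨s, rfl⟩ := hB.2
    obtain ⟨j, hj, hjp, hpj⟩ := hC.2 (s.length + p) (by simp only [List.length_append]; omega)
    obtain ⟨i, rfl⟩ := Nat.exists_eq_add_of_le (show s.length ≤ j by omega)
    exact ⟨i, isOcc_append_left_iff.mp hj, by omega, by omega⟩

theorem of_isBorder_of_longest (hC : IsCover C T) (hCT : C ≠ T) (hB : IsBorder B T)
    (hBmax : ∀ B' : List α, IsBorder B' T → B' ≠ [] → B'.length < T.length →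
      B'.length ≤ B.length) :
    IsCover C B := by
  have hT : T ≠ [] := by
    rintro rfl
    exact hCT (List.eq_nil_of_length_eq_zero (Nat.le_zero.mp hC.1))
  have hlt : C.length < T.length :=
    lt_of_le_of_ne hC.1 fun h => hCT (hC.isPrefix.eq_of_length h)
  exact hC.of_isBorder hB (hBmax C hC.isBorder (hC.ne_nil hT) hlt)

end IsCover

theorem AFI_recursion_step_general (T B C : List α)
    (hB : IsBorder B T) (hBproper : B.length < T.length)
    (hBmax : ∀ B'' : List α, IsBorder B'' T → B'' ≠ [] → B''.length < T.length →
      B''.length ≤ B.length)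
    (hC : IsCover C B) (hCmin : ∀ C' : List α, IsCover C' B → C.length ≤ C'.length) :
    (IsCover C T → ∀ C' : List α, IsCover C' T → C.length ≤ C'.length) ∧
    (¬ IsCover C T → ∀ C' : List α, IsCover C' T → C' = T) := by
  refine ⟨fun _ C' hC' => ?_, fun hCT C' hC' => ?_⟩
  · obtain rfl | hne := eq_or_ne C' T
    · exact hC.1.trans hBproper.le
    · exact hCmin C' (hC'.of_isBorder_of_longest hne hB hBmax)
  · by_contra hne
    have hC'B : IsCover C' B := hC'.of_isBorder_of_longest hne hB hBmax
    exact hCT ((hC.of_isBorder hC'B.isBorder (hCmin C' hC'B)).trans hC')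

theorem AFI_recursion_step (T B C : List α) (hT : T ≠ [])
    (hB : IsBorder B T) (hBne : B ≠ []) (hBproper : B.length < T.length)
    (hBmax : ∀ B'' : List α, IsBorder B'' T → B'' ≠ [] → B''.length < T.length →
      B''.length ≤ B.length)
    (hC : IsCover C B) (hCmin : ∀ C' : List α, IsCover C' B → C.length ≤ C'.length) :
    (IsCover C T → ∀ C' : List α, IsCover C' T → C.length ≤ C'.length) ∧
    (¬ IsCover C T → ∀ C' : List α, IsCover C' T → C' = T) :=
  AFI_recursion_step_general T B C hB hBproper hBmax hC hCmin
end

section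
/- Every substring of a string T whose length is at least per(T) is a seed of T: if S = T[i,j] with j − i + 1 ≥ per(T), then S is a seed of T. -/
/-!
STATEMENT 7: Every substring of a string `T` whose length is at least
`per(T)` is a seed of `T`: if `S = T[i,j]` with `j − i + 1 ≥ per(T)`,
then `S` is a seed of `T`.
Strings are modelled as lists; positions are 0-based, and the substring of
`T` of length `len` starting at (0-based) position `i` is
`(T.drop i).take len`.
-/

variable {α : Type*}

/-- `S` is a seed of `T`: `|S| ≤ |T|` and `S` is a cover of some string
containing `T` as a substring. -/
def IsSeed (S T : List α) : Prop :=
  S.length ≤ T.length ∧ ∃ U : List α, T <:+: U ∧ IsCover S U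

theorem getElem_idx_eq (l : List α) {a b : ℕ} (h : a = b) (ha : a < l.length) :
    l[a] = l[b]'(h ▸ ha) := by subst h; rfl

theorem period_getElem (T : List α) (p : ℕ) (hp : IsPeriod T p) (t : ℕ) (ht : t < T.length) :
    T[t] = T[t % p]'(Nat.lt_of_lt_of_le (Nat.mod_lt _ hp.1) hp.2.1) := by
  induction t using Nat.strong_induction_on with
  | _ t ih =>
    have hp1 : 1 ≤ p := hp.1
    rcases Nat.lt_or_ge t p with h | h
    · exact getElem_idx_eq T (Nat.mod_eq_of_lt h).symm ht
    · have h1 : t - p + p < T.length := by omega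
      have e1 : T[t - p]'(by omega) = T[t - p + p]'h1 := hp.2.2 (t - p) h1
      have e2 : T[t - p + p]'h1 = T[t]'ht := getElem_idx_eq T (by omega) h1
      have e3 : (t - p) % p = t % p := by
        conv_rhs => rw [show t = t - p + p by omega]
        rw [Nat.add_mod_right]
      rw [← e2, ← e1, ih (t - p) (by omega) (by omega)]
      exact getElem_idx_eq T e3 _

theorem long_substring_is_seed (T : List α) (p : ℕ)
    (hp : IsLeast {q | IsPeriod T q} p)
    (i len : ℕ) (hfit : i + len ≤ T.length) (hlen : p ≤ len) :
    IsSeed ((T.drop i).take len) T := by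
  obtain ⟨hper, -⟩ := hp
  have hp1 : 1 ≤ p := hper.1
  have hpn : p ≤ T.length := hper.2.1
  -- m : multiple of p with i ≤ m < i + p
  obtain ⟨m, hm⟩ : ∃ m, m = p * ((i + p - 1) / p) := ⟨_, rfl⟩
  have hm1 : m + (i + p - 1) % p = i + p - 1 := by rw [hm]; exact Nat.div_add_mod _ _
  have hm2 : (i + p - 1) % p < p := Nat.mod_lt _ hp1
  have hm0 : m % p = 0 := by rw [hm]; exact Nat.mul_mod_right _ _
  have him : i ≤ m := by omega
  have hmi : m < i + p := by omega
  obtain ⟨a, ha⟩ : ∃ a, a = m - i := ⟨_, rfl⟩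
  have hai : a + i = m := by omega
  have hap : a < p := by omega
  -- M : big multiple of p for the length of U
  obtain ⟨M, hM⟩ : ∃ M, M = p * (a + T.length) := ⟨_, rfl⟩
  have hM1 : a + T.length ≤ M := by rw [hM]; exact Nat.le_mul_of_pos_left _ hp1
  have hM0 : M % p = 0 := by rw [hM]; exact Nat.mul_mod_right _ _
  obtain ⟨N, hN⟩ : ∃ N, N = len + M := ⟨_, rfl⟩
  -- the periodic extension U
  obtain ⟨U, hU⟩ : ∃ U : List α,
      U = (List.range N).map
        (fun x => T[(x + i) % p]'(Nat.lt_of_lt_of_le (Nat.mod_lt _ hp1) hpn)) := ⟨_, rfl⟩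
  have hUlen : U.length = N := by simp [hU]
  have hUget : ∀ x (hx : x < N), U[x]'(by omega) =
      T[(x + i) % p]'(Nat.lt_of_lt_of_le (Nat.mod_lt _ hp1) hpn) := by
    intro x hx
    simp [hU]
  -- facts about S
  have hSlen : ((T.drop i).take len).length = len := by simp; omega
  have hSget : ∀ t (ht : t < len), ((T.drop i).take len)[t]'(by omega) =
      T[t + i]'(by omega) := by
    intro t ht
    simp
    exact getElem_idx_eq T (by omega) _
  -- occurrences of S in U at multiples of p
  have hocc : ∀ j, j % p = 0 → j + len ≤ N → IsOcc U ((T.drop i).take len) j := by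
    intro j hj0 hjlen
    refine ⟨by omega, ?_⟩
    apply List.ext_getElem
    · rw [hSlen]; simp [hUlen]; omega
    · intro t h1 h2
      rw [hSlen] at h2
      rw [List.getElem_take, List.getElem_drop]
      rw [hUget (j + t) (by omega)]
      rw [hSget t h2, period_getElem T p hper (t + i) (by omega)]
      apply getElem_idx_eq
      rw [Nat.add_assoc, Nat.add_mod, hj0, Nat.zero_add, Nat.mod_mod]
  refine ⟨by rw [hSlen]; omega, U, ?_, ?_, ?_⟩
  · -- T is an infix of U : T = (U.drop a).take T.length
    have hTeq : (U.drop a).take T.length = T := by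
      apply List.ext_getElem
      · simp [hUlen]; omega
      · intro t h1 h2
        rw [List.getElem_take, List.getElem_drop]
        rw [hUget (a + t) (by omega)]
        rw [period_getElem T p hper t h2]
        apply getElem_idx_eq
        have e : a + t + i = m + t := by omega
        rw [e, Nat.add_mod, hm0, Nat.zero_add, Nat.mod_mod]
    rw [← hTeq]
    exact ((U.drop a).take_prefix T.length).isInfix.trans (U.drop_suffix a).isInfix
  · rw [hSlen, hUlen]; omega
  · -- coverage
    intro q hq
    rw [hUlen] at hq
    have hdm : p * (q / p) + q % p = q := Nat.div_add_mod _ _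
    have hmr : q % p < p := Nat.mod_lt _ hp1
    rcases le_or_gt (q / p) (a + T.length) with h | h
    · -- j = p * (q / p)
      have hle : p * (q / p) ≤ M := by rw [hM]; exact Nat.mul_le_mul_left _ h
      refine ⟨p * (q / p), hocc _ (Nat.mul_mod_right _ _) (by omega), by omega,
        by rw [hSlen]; omega⟩
    · -- j = M
      have hge : M + p ≤ p * (q / p) := by
        have := Nat.mul_le_mul_left p h
        rw [Nat.mul_succ] at this
        omega
      refine ⟨M, hocc _ hM0 (by omega), by omega, by rw [hSlen]; omega⟩
end

section
/- For a string T and 1 ≤ k < |T|, define β_k(T) as the number of distinct substrings of T of length k plus (k − 1) (counting all prefixes of T of length smaller than k). Then β_k(T) ≤ β_{k+1}(T). -/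
/-!
STATEMENT 10: For a string `T` and `1 ≤ k < |T|`, define `β_k(T)` as the
number of distinct substrings of `T` of length `k` plus `(k − 1)`
(counting all prefixes of `T` of length smaller than `k`).
Then `β_k(T) ≤ β_{k+1}(T)`.
Strings are modelled as lists; a substring of `T` of length `k` is an
infix (contiguous sublist) of `T` of length `k`.
-/

theorem beta_monotone {α : Type*} (T : List α) (k : ℕ) (h1 : 1 ≤ k)
    (h2 : k < T.length) :
    {W : List α | W.length = k ∧ W <:+: T}.ncard + (k - 1) ≤
      {W : List α | W.length = k + 1 ∧ W <:+: T}.ncard + k := by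
  set S : ℕ → Set (List α) := fun n => {W : List α | W.length = n ∧ W <:+: T} with hS
  have hfin : ∀ n, (S n).Finite := by
    intro n
    apply Set.Finite.subset (List.finite_toSet T.sublists)
    intro W hW
    simp only [hS, Set.mem_setOf_eq] at hW
    simpa using hW.2.sublist
  have hsub : S k ⊆ insert (T.drop (T.length - k)) ((fun W => W.take k) '' S (k+1)) := by
    rintro W ⟨hlen, s, t, hst⟩
    cases t with
    | nil =>
      left
      have hT : s ++ W = T := by simpa using hst
      have hlenT : T.length = s.length + k := by
        rw [← hT, List.length_append, hlen]
      rw [hlenT, Nat.add_sub_cancel, ← hT, List.drop_left]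
    | cons a t' =>
      right
      refine ⟨W ++ [a], ⟨by simp [hlen], s, t', ?_⟩, ?_⟩
      · rw [← hst]; simp
      · simp [← hlen, List.take_left]
  have h3 : (S k).ncard ≤ (S (k+1)).ncard + 1 := by
    calc (S k).ncard ≤ (insert (T.drop (T.length - k))
          ((fun W => W.take k) '' S (k+1))).ncard :=
          Set.ncard_le_ncard hsub (((hfin (k+1)).image _).insert _)
      _ ≤ ((fun W => W.take k) '' S (k+1)).ncard + 1 := Set.ncard_insert_le _ _
      _ ≤ (S (k+1)).ncard + 1 := by
          exact Nat.add_le_add_right (Set.ncard_image_le (hfin (k+1))) 1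
  show (S k).ncard + (k - 1) ≤ (S (k+1)).ncard + k
  omega
end

section
/- Let S and T be strings with |S| ≥ 1 and 2·|S| − 1 ≤ |T|. Then S is a seed of T if and only if S is a seed of every substring of T of length 2·|S| − 1, i.e., of T[i, i+2|S|−2] for every i with 1 ≤ i ≤ |T| − 2|S| + 2. -/
/-!
STATEMENT 11: Let `S` and `T` be strings with `|S| ≥ 1` and
`2·|S| − 1 ≤ |T|`.  Then `S` is a seed of `T` if and only if `S` is a seed of
every substring of `T` of length `2·|S| − 1`, i.e. of `T[i, i+2|S|−2]` for
every valid starting position `i`.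
Strings are modelled as lists; positions are 0-based, and the substring of
length `2|S|−1` starting at (0-based) position `i` is
`(T.drop i).take (2·|S| − 1)`.
-/

variable {α : Type*}

/-!
Seededness passes to every factor of length at least `|S|`, which gives one direction. Conversely,
extend `T` to the left as the first window is extended by its cover, and to the right as the last
one is. A position near either end is then covered by an occurrence coming from that window's
cover; any other position of `T` is the centre of a window of length `2|S| - 1`, and an
occurrence covering the centre of such a window lies inside the window, hence inside `T`.
-/

section Occurrences

variable {C P Q T : List α} {i p : ℕ}

lemma IsOcc.append_right (h : IsOcc P C i) (Q : List α) : IsOcc (P ++ Q) C i := by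
  obtain ⟨hlen, htake⟩ := h
  refine ⟨by simp; omega, ?_⟩
  rwa [List.drop_append_of_le_length (by omega),
    List.take_append_of_le_length (by simp; omega)]

lemma IsOcc.append_left (h : IsOcc Q C i) (P : List α) :
    IsOcc (P ++ Q) C (P.length + i) := by
  obtain ⟨hlen, htake⟩ := h
  exact ⟨by simp; omega, by rwa [List.drop_length_add_append]⟩

lemma IsOcc.left_of_append (h : IsOcc (P ++ Q) C i) (hi : i + C.length ≤ P.length) :
    IsOcc P C i := by
  obtain ⟨-, htake⟩ := h
  refine ⟨hi, ?_⟩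
  rwa [List.drop_append_of_le_length (by omega),
    List.take_append_of_le_length (by simp; omega)] at htake

lemma IsOcc.right_of_append (h : IsOcc (P ++ Q) C (P.length + i)) : IsOcc Q C i := by
  obtain ⟨hlen, htake⟩ := h
  exact ⟨by simp at hlen; omega, by rwa [List.drop_length_add_append] at htake⟩

lemma IsOcc.of_drop_take {j w : ℕ} (h : IsOcc ((T.drop j).take w) C i) (hC : 0 < C.length) :
    IsOcc T C (j + i) := by
  obtain ⟨hlen, htake⟩ := h
  simp only [List.length_take, List.length_drop] at hlen
  refine ⟨by omega, ?_⟩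
  rwa [List.drop_take, List.drop_drop, List.take_take, min_eq_left (by omega)] at htake

lemma CoveredPos.append_right (h : CoveredPos P C p) (Q : List α) : CoveredPos (P ++ Q) C p :=
  let ⟨i, hocc, hip, hpi⟩ := h
  ⟨i, hocc.append_right Q, hip, hpi⟩

lemma CoveredPos.append_left (h : CoveredPos Q C p) (P : List α) :
    CoveredPos (P ++ Q) C (P.length + p) := by
  obtain ⟨i, hocc, hip, hpi⟩ := h
  exact ⟨P.length + i, hocc.append_left P, by omega, by omega⟩

lemma CoveredPos.left_of_append (h : CoveredPos (P ++ Q) C p)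
    (hp : p + C.length ≤ P.length) : CoveredPos P C p := by
  obtain ⟨i, hocc, hip, hpi⟩ := h
  exact ⟨i, hocc.left_of_append (by omega), hip, hpi⟩

lemma CoveredPos.right_of_append (h : CoveredPos (P ++ Q) C (P.length + p))
    (hp : C.length ≤ p + 1) : CoveredPos Q C p := by
  obtain ⟨i, hocc, hip, hpi⟩ := h
  obtain ⟨k, rfl⟩ : ∃ k, i = P.length + k := ⟨i - P.length, by omega⟩
  exact ⟨k, hocc.right_of_append, by omega, by omega⟩

lemma CoveredPos.of_drop_take {j w : ℕ} (h : CoveredPos ((T.drop j).take w) C p) :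
    CoveredPos T C (j + p) := by
  obtain ⟨i, hocc, hip, hpi⟩ := h
  exact ⟨j + i, hocc.of_drop_take (by omega), by omega, by omega⟩

end Occurrences

section Seeds

variable {A B C S T W : List α} {p : ℕ}

lemma IsSeed.of_infix (h : IsSeed S T) (hW : W <:+: T) (hlen : S.length ≤ W.length) :
    IsSeed S W :=
  let ⟨_, U, hTU, hcov⟩ := h
  ⟨hlen, U, hW.trans hTU, hcov⟩

lemma IsSeed.coveredPos (h : IsSeed S W) (hS : 0 < S.length) (hp₁ : S.length ≤ p + 1)
    (hp₂ : p + S.length ≤ W.length) : CoveredPos W S p := by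
  obtain ⟨-, U, ⟨A, B, rfl⟩, -, hcov⟩ := h
  have hU := hcov (A.length + p) (by simp; omega)
  rw [List.append_assoc] at hU
  exact (hU.right_of_append hp₁).left_of_append hp₂

lemma IsCover.coveredPos_of_prefix (hcov : IsCover C (A ++ W ++ B)) (hW : W <+: T)
    (hC : 0 < C.length) (hp : p + C.length ≤ A.length + W.length) (B' : List α) :
    CoveredPos (A ++ T ++ B') C p := by
  obtain ⟨R, rfl⟩ := hW
  have hAW := (hcov.2 p (by simp; omega)).left_of_append (by simpa using hp)
  simpa using hAW.append_right (R ++ B')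

lemma IsCover.coveredPos_of_suffix (hcov : IsCover C (A ++ W ++ B)) (hW : W <:+ T) {r : ℕ}
    (hr₁ : C.length ≤ r + 1) (hr₂ : r < W.length + B.length) (A' : List α) :
    CoveredPos (A' ++ T ++ B) C (A'.length + (T.length - W.length) + r) := by
  obtain ⟨L, rfl⟩ := hW
  have hU := hcov.2 (A.length + r) (by simp; omega)
  rw [List.append_assoc] at hU
  simpa [Nat.add_assoc] using (hU.right_of_append hr₁).append_left (A' ++ L)

theorem isSeed_of_forall_window (hS : 1 ≤ S.length) (hT : 2 * S.length - 1 ≤ T.length)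
    (h : ∀ i, i + (2 * S.length - 1) ≤ T.length →
      IsSeed S ((T.drop i).take (2 * S.length - 1))) :
    IsSeed S T := by
  set m := S.length
  set w := 2 * m - 1
  obtain ⟨-, U₁, ⟨A, B₁, rfl⟩, hcov₁⟩ := h 0 (by omega)
  obtain ⟨-, U₂, ⟨A₂, B, rfl⟩, hcov₂⟩ := h (T.length - w) (by omega)
  have hfirst : (T.drop 0).take w <+: T := by simpa using List.take_prefix w T
  have hlast : (T.drop (T.length - w)).take w <:+ T := by
    rw [List.take_of_length_le (by simp; omega)]
    exact List.drop_suffix _ T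
  refine ⟨by omega, A ++ T ++ B, ⟨A, B, rfl⟩, by simp; omega, fun p hp => ?_⟩
  simp only [List.length_append] at hp
  rcases lt_or_ge p (A.length + (m - 1)) with hleft | hleft
  · exact hcov₁.coveredPos_of_prefix hfirst hS (by simp; omega) B
  obtain ⟨q, rfl⟩ : ∃ q, p = A.length + q := ⟨p - A.length, by omega⟩
  rcases lt_or_ge q (T.length - (m - 1)) with hmid | hright
  · have hwin := (h (q - (m - 1)) (by omega)).coveredPos (p := m - 1) hS (by omega)
      (by simp; omega)
    have hq := hwin.of_drop_take
    rw [show q - (m - 1) + (m - 1) = q by omega] at hq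
    exact (hq.append_left A).append_right B
  · have hr := hcov₂.coveredPos_of_suffix hlast (r := q - (T.length - w)) (by omega)
      (by simp; omega) A
    simp only [List.length_take, List.length_drop] at hr
    convert hr using 1
    omega

end Seeds

theorem seed_iff_seed_of_all_windows (S T : List α)
    (hS : 1 ≤ S.length) (hT : 2 * S.length - 1 ≤ T.length) :
    IsSeed S T ↔
      ∀ i, i + (2 * S.length - 1) ≤ T.length →
        IsSeed S ((T.drop i).take (2 * S.length - 1)) :=
  ⟨fun h i hi => h.of_infix ((List.take_prefix _ _).isInfix.trans (List.drop_suffix _ _).isInfix)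
      (by simp; omega),
    isSeed_of_forall_window hS hT⟩
end

section
/- Let λ ≥ 2 and m ≥ 1, let the alphabet contain λ distinct letters a, b_1, …, b_{λ−1}, and let S = (a^m b_1)^2 (a^m b_2)^2 ⋯ (a^m b_{λ−1})^2 a^m. Let i_1, j_1, …, i_{λ−1}, j_{λ−1} be non-negative integers with 0 < i_1 + j_1 = i_2 + j_2 = ⋯ = i_{λ−1} + j_{λ−1} < m, and set s = i_1 + j_1. Then the family of λ strings (a^{i_1} b_1 a^{j_1}, …, a^{i_{λ−1}} b_{λ−1} a^{j_{λ−1}}, a^{s+1}) is a λ-cover of S consisting of strings all of length s + 1, and moreover no proper subfamily of these λ strings covers S (for each of the λ strings, some position of S lies within an occurrence of that string only). -/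
/-!
Every position of `S` holding an `a` lies in a run of `m ≥ s + 1` letters `a`, hence inside an
occurrence of `a^{s+1}`; every `b_t` is flanked by `a^m` on both sides, hence lies inside an
occurrence of `a^{i_t} b_t a^{j_t}`. For minimality, the first `b_t` can only be covered by a
string containing `b_t`, and position `0` only by the length-`(s + 1)` prefix of `S`, which is
`a^{s+1}`.
-/

variable {α : Type*}

open List

theorem coveredPos_self {C : List α} {p : ℕ} (hp : p < C.length) : CoveredPos C C p :=
  ⟨0, ⟨by simp, by simp⟩, Nat.zero_le p, by simpa⟩

namespace CoveredPos

variable {T C : List α} {p : ℕ}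

theorem append_left_s13 (u : List α) (h : CoveredPos T C p) :
    CoveredPos (u ++ T) C (u.length + p) := by
  obtain ⟨q, ⟨hlen, hq⟩, hqp, hpq⟩ := h
  refine ⟨u.length + q, ⟨by simp; omega, ?_⟩, by omega, by omega⟩
  rwa [drop_length_add_append]

theorem append_right_s13 (v : List α) (h : CoveredPos T C p) : CoveredPos (T ++ v) C p := by
  obtain ⟨q, ⟨hlen, hq⟩, hqp, hpq⟩ := h
  refine ⟨q, ⟨by simp; omega, ?_⟩, hqp, hpq⟩
  rwa [drop_append_of_le_length (by omega), take_append_of_le_length (by simp; omega)]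

theorem getElem_mem (h : CoveredPos T C p) (hp : p < T.length) : T[p] ∈ C := by
  obtain ⟨q, ⟨hlen, hq⟩, hqp, hpq⟩ := h
  have hC : C[p - q]'(by omega) = T[p] := by
    simp only [← getElem_of_eq hq (i := p - q) (by simp; omega), getElem_take, getElem_drop]
    congr 1; omega
  exact hC ▸ List.getElem_mem _

theorem take_length_eq_of_zero (h : CoveredPos T C 0) : T.take C.length = C := by
  obtain ⟨q, ⟨-, hq⟩, hq0, -⟩ := h
  obtain rfl : q = 0 := by omega
  simpa using hq

end CoveredPos

theorem coveredPos_replicate {a : α} {k m p : ℕ} (hk0 : 0 < k) (hkm : k ≤ m) (hp : p < m) :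
    CoveredPos (replicate m a) (replicate k a) p := by
  set q := min p (m - k)
  have hsplit : replicate m a = replicate q a ++ (replicate k a ++ replicate (m - q - k) a) := by
    simp only [← replicate_add]; congr 1; omega
  have h := ((coveredPos_self (C := replicate k a) (p := p - q) (by simp; omega)).append_right_s13
    (replicate (m - q - k) a)).append_left_s13 (replicate q a)
  rw [hsplit]
  convert h using 1
  simp; omega

theorem coveredPos_letter_between_runs {a c : α} {i j m : ℕ} (hi : i ≤ m) (hj : j ≤ m)
    (u v : List α) :
    CoveredPos (u ++ replicate m a ++ c :: (replicate m a ++ v))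
      (replicate i a ++ [c] ++ replicate j a) (u.length + m) := by
  have hsplit : u ++ replicate m a ++ c :: (replicate m a ++ v) =
      (u ++ replicate (m - i) a) ++
        ((replicate i a ++ [c] ++ replicate j a) ++ (replicate (m - j) a ++ v)) := by
    have hl : replicate m a = replicate (m - i) a ++ replicate i a := by
      rw [← replicate_add]; congr 1; omega
    have hr : replicate m a = replicate j a ++ replicate (m - j) a := by
      rw [← replicate_add]; congr 1; omega
    nth_rewrite 1 [hl]
    rw [hr]
    simp only [append_assoc, cons_append, nil_append]
  have h := ((coveredPos_self (C := replicate i a ++ [c] ++ replicate j a) (p := i)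
    (by simp)).append_right_s13 (replicate (m - j) a ++ v)).append_left_s13 (u ++ replicate (m - i) a)
  rw [hsplit]
  convert h using 1
  simp; omega

theorem flatMap_append_eq_append_flatMap {β : Type*} (u : List α) (f : β → List α)
    (l : List β) :
    (l.flatMap fun x => u ++ f x) ++ u = u ++ l.flatMap fun x => f x ++ u := by
  induction l with
  | nil => simp
  | cons x l ih => simp [ih]

theorem exists_coveredPos_of_runs {a : α} {m k : ℕ} (Cs : List (List α))
    (hk0 : 0 < k) (hkm : k ≤ m) (hrun : replicate k a ∈ Cs)
    (w : List α)
    (hletter : ∀ c ∈ w, ∃ i ≤ m, ∃ j ≤ m, replicate i a ++ [c] ++ replicate j a ∈ Cs)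
    {p : ℕ} (hp : p < (replicate m a ++ w.flatMap fun c => c :: replicate m a).length) :
    ∃ C ∈ Cs, CoveredPos (replicate m a ++ w.flatMap fun c => c :: replicate m a) C p := by
  induction w generalizing p with
  | nil =>
    simp only [flatMap_nil, append_nil, length_replicate] at hp ⊢
    exact ⟨_, hrun, coveredPos_replicate hk0 hkm hp⟩
  | cons c w ih =>
    have hT : replicate m a ++ (c :: w).flatMap (fun c => c :: replicate m a) =
        replicate m a ++ c :: (replicate m a ++ w.flatMap fun c => c :: replicate m a) := by
      simp
    rw [hT] at hp ⊢
    rcases lt_trichotomy p m with hpm | rfl | hpm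
    · exact ⟨_, hrun, (coveredPos_replicate hk0 hkm hpm).append_right_s13 _⟩
    · obtain ⟨i, hi, j, hj, hmem⟩ := hletter c mem_cons_self
      exact ⟨_, hmem, by simpa using coveredPos_letter_between_runs hi hj [] _⟩
    · have hp' :
          p - (m + 1) < (replicate m a ++ w.flatMap fun c => c :: replicate m a).length := by
        simp only [length_append, length_replicate, length_cons] at hp ⊢; omega
      obtain ⟨C, hC, hcov⟩ := ih (fun c hc => hletter c (mem_cons_of_mem _ hc)) hp'
      refine ⟨C, hC, ?_⟩
      convert hcov.append_left_s13 (replicate m a ++ [c]) using 1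
      · simp
      · simp; omega

theorem exists_pos_covered_only_by_letter {a c : α} {i j m : ℕ} (hi : i ≤ m) (hj : j ≤ m)
    (u v : List α) (Cs : List (List α))
    (honly : ∀ C ∈ Cs, c ∈ C → C = replicate i a ++ [c] ++ replicate j a) :
    ∃ p < (u ++ replicate m a ++ c :: (replicate m a ++ v)).length,
      CoveredPos (u ++ replicate m a ++ c :: (replicate m a ++ v))
        (replicate i a ++ [c] ++ replicate j a) p ∧
      ∀ C ∈ Cs, C ≠ replicate i a ++ [c] ++ replicate j a →
        ¬ CoveredPos (u ++ replicate m a ++ c :: (replicate m a ++ v)) C p := by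
  have hlt : u.length + m < (u ++ replicate m a ++ c :: (replicate m a ++ v)).length := by
    simp
  refine ⟨u.length + m, hlt, coveredPos_letter_between_runs hi hj u v, fun C hC hne hcov => ?_⟩
  have hcC : c ∈ C := by simpa [getElem_append_right] using hcov.getElem_mem hlt
  exact hne (honly C hC hcC)

theorem exists_pos_covered_only_by_run {a : α} {k m : ℕ} (hk0 : 0 < k) (hkm : k ≤ m)
    (v : List α) (Cs : List (List α)) (hlen : ∀ C ∈ Cs, C.length = k) :
    ∃ p < (replicate m a ++ v).length, CoveredPos (replicate m a ++ v) (replicate k a) p ∧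
      ∀ C ∈ Cs, C ≠ replicate k a → ¬ CoveredPos (replicate m a ++ v) C p := by
  refine ⟨0, by simp; omega, (coveredPos_replicate hk0 hkm (by omega)).append_right_s13 v,
    fun C hC hne hcov => hne ?_⟩
  rw [← hcov.take_length_eq_of_zero, hlen C hC, take_append_of_le_length (by simp; omega),
    take_replicate, min_eq_left hkm]

section Family

variable {ι : Type*} (a : α) (m : ℕ) (b : ι → α) (i j : ι → ℕ) (s : ℕ) (l : List ι)

def doubledBlockString : List α :=
  (l.flatMap fun t => (replicate m a ++ [b t]) ++ (replicate m a ++ [b t])) ++ replicate m a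

def coverFamily : List (List α) :=
  (l.map fun t => replicate (i t) a ++ [b t] ++ replicate (j t) a) ++ [replicate (s + 1) a]

variable {a m b i j s l}

theorem mem_coverFamily {C : List α} : C ∈ coverFamily a b i j s l ↔
    (∃ t ∈ l, replicate (i t) a ++ [b t] ++ replicate (j t) a = C) ∨
      C = replicate (s + 1) a := by
  simp [coverFamily]

theorem length_of_mem_coverFamily (hsum : ∀ t, i t + j t = s) {C : List α}
    (hC : C ∈ coverFamily a b i j s l) : C.length = s + 1 := by
  rcases mem_coverFamily.1 hC with ⟨t, -, rfl⟩ | rfl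
  · simp [← hsum t]; omega
  · simp

theorem doubledBlockString_eq_replicate_append :
    doubledBlockString a m b l =
      replicate m a ++ (l.flatMap fun t => [b t, b t]).flatMap fun c => c :: replicate m a := by
  simpa [doubledBlockString, flatMap_assoc] using
    flatMap_append_eq_append_flatMap (replicate m a) (fun t => [b t] ++ replicate m a ++ [b t]) l

theorem exists_coveredPos_doubledBlockString (hsum : ∀ t, i t + j t = s) (hsm : s < m) {p : ℕ}
    (hp : p < (doubledBlockString a m b l).length) :
    ∃ C ∈ coverFamily a b i j s l, CoveredPos (doubledBlockString a m b l) C p := by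
  rw [doubledBlockString_eq_replicate_append] at hp ⊢
  refine exists_coveredPos_of_runs _ s.succ_pos hsm (mem_coverFamily.2 (.inr rfl)) _ ?_ hp
  intro c hc
  obtain ⟨t, ht, hct⟩ := mem_flatMap.1 hc
  obtain rfl : c = b t := by simpa using hct
  exact ⟨i t, by grind, j t, by grind, mem_coverFamily.2 (.inl ⟨t, ht, rfl⟩)⟩

theorem exists_pos_covered_only_by_pattern (hab : ∀ t, b t ≠ a) (hbinj : Function.Injective b)
    (hsum : ∀ t, i t + j t = s) (hsm : s < m) {t : ι} (ht : t ∈ l) :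
    ∃ p < (doubledBlockString a m b l).length,
      CoveredPos (doubledBlockString a m b l)
        (replicate (i t) a ++ [b t] ++ replicate (j t) a) p ∧
      ∀ C ∈ coverFamily a b i j s l, C ≠ replicate (i t) a ++ [b t] ++ replicate (j t) a →
        ¬ CoveredPos (doubledBlockString a m b l) C p := by
  have honly : ∀ C ∈ coverFamily a b i j s l, b t ∈ C →
      C = replicate (i t) a ++ [b t] ++ replicate (j t) a := by
    intro C hC hbC
    rcases mem_coverFamily.1 hC with ⟨t', -, rfl⟩ | rfl
    · simp only [mem_append, mem_replicate, mem_singleton, hab, and_false, or_false,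
        false_or, hbinj.eq_iff] at hbC
      rw [hbC]
    · exact absurd (eq_of_mem_replicate hbC) (hab t)
  obtain ⟨l₁, l₂, rfl⟩ := append_of_mem ht
  have hsplit : doubledBlockString a m b (l₁ ++ t :: l₂) =
      (l₁.flatMap fun t => replicate m a ++ [b t] ++ (replicate m a ++ [b t])) ++ replicate m a ++
        b t :: (replicate m a ++ ([b t] ++ doubledBlockString a m b l₂)) := by
    simp [doubledBlockString]
  rw [hsplit]
  exact exists_pos_covered_only_by_letter (by grind) (by grind) _ _ _ honly

theorem exists_pos_covered_only_by_of_mem_coverFamily (hab : ∀ t, b t ≠ a)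
    (hbinj : Function.Injective b) (hsum : ∀ t, i t + j t = s) (hsm : s < m) :
    ∀ C ∈ coverFamily a b i j s l, ∃ p < (doubledBlockString a m b l).length,
      CoveredPos (doubledBlockString a m b l) C p ∧
      ∀ C' ∈ coverFamily a b i j s l, C' ≠ C →
        ¬ CoveredPos (doubledBlockString a m b l) C' p := by
  intro C hC
  rcases mem_coverFamily.1 hC with ⟨t, ht, rfl⟩ | rfl
  · exact exists_pos_covered_only_by_pattern hab hbinj hsum hsm ht
  · rw [doubledBlockString_eq_replicate_append]
    exact exists_pos_covered_only_by_run s.succ_pos hsm _ _ fun C => length_of_mem_coverFamily hsum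

end Family

theorem lambda_cover_example_general (lam m : ℕ)
    (a : α) (b : Fin (lam - 1) → α)
    (hab : ∀ t, b t ≠ a) (hbinj : Function.Injective b)
    (i j : Fin (lam - 1) → ℕ) (s : ℕ)
    (hsum : ∀ t, i t + j t = s) (hsm : s < m)
    (S : List α)
    (hS : S = ((List.finRange (lam - 1)).flatMap fun t =>
        (List.replicate m a ++ [b t]) ++ (List.replicate m a ++ [b t])) ++
        List.replicate m a)
    (Cs : List (List α))
    (hCs : Cs = ((List.finRange (lam - 1)).map fun t =>
        List.replicate (i t) a ++ [b t] ++ List.replicate (j t) a) ++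
        [List.replicate (s + 1) a]) :
    (∀ C ∈ Cs, C.length = s + 1) ∧
    (∀ p, p < S.length → ∃ C ∈ Cs, CoveredPos S C p) ∧
    (∀ C ∈ Cs, ∃ p, p < S.length ∧ CoveredPos S C p ∧
      ∀ C' ∈ Cs, C' ≠ C → ¬ CoveredPos S C' p) := by
  obtain rfl : S = doubledBlockString a m b (finRange (lam - 1)) := hS
  obtain rfl : Cs = coverFamily a b i j s (finRange (lam - 1)) := hCs
  exact ⟨fun _ => length_of_mem_coverFamily hsum,
    fun _ => exists_coveredPos_doubledBlockString hsum hsm,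
    exists_pos_covered_only_by_of_mem_coverFamily hab hbinj hsum hsm⟩

theorem lambda_cover_example (lam m : ℕ) (hlam : 2 ≤ lam) (hm : 1 ≤ m)
    (a : α) (b : Fin (lam - 1) → α)
    (hab : ∀ t, b t ≠ a) (hbinj : Function.Injective b)
    (i j : Fin (lam - 1) → ℕ) (s : ℕ)
    (hsum : ∀ t, i t + j t = s) (hs0 : 0 < s) (hsm : s < m)
    (S : List α)
    (hS : S = ((List.finRange (lam - 1)).flatMap fun t =>
        (List.replicate m a ++ [b t]) ++ (List.replicate m a ++ [b t])) ++
        List.replicate m a)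
    (Cs : List (List α))
    (hCs : Cs = ((List.finRange (lam - 1)).map fun t =>
        List.replicate (i t) a ++ [b t] ++ List.replicate (j t) a) ++
        [List.replicate (s + 1) a]) :
    (∀ C ∈ Cs, C.length = s + 1) ∧
    (∀ p, p < S.length → ∃ C ∈ Cs, CoveredPos S C p) ∧
    (∀ C ∈ Cs, ∃ p, p < S.length ∧ CoveredPos S C p ∧
      ∀ C' ∈ Cs, C' ≠ C → ¬ CoveredPos S C' p) :=
  lambda_cover_example_general lam m a b hab hbinj i j s hsum hsm S hS Cs hCs
end

section
/- Let C be a nonempty string and T a string, and let Covered_T(C) = |{p : 1 ≤ p ≤ |T| and there exists i ∈ Occ_T(C) with i ≤ p ≤ i+|C|−1}| be the number of positions of T covered by occurrences of C. Then there exists a subset O ⊆ Occ_T(C) of pairwise non-overlapping occurrences (any two distinct i, j ∈ O satisfy |i − j| ≥ |C|) such that 2·|O|·|C| ≥ Covered_T(C). -/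
/-!
STATEMENT 15: Let `C` be a nonempty string and `T` a string, and let
`Covered_T(C)` be the number of positions of `T` covered by occurrences of
`C`.  Then there exists a subset `O ⊆ Occ_T(C)` of pairwise non-overlapping
occurrences (any two distinct `i, j ∈ O` satisfy `|i − j| ≥ |C|`) such that
`2·|O|·|C| ≥ Covered_T(C)`.
Strings are modelled as lists; positions are 0-based.  The non-overlapping
condition `|i − j| ≥ |C|` for distinct `i, j` is stated as
`i < j → i + |C| ≤ j`.
-/

variable {α : Type*}

lemma greedy_aux (C T : List α) (hC : 0 < C.length) :
    ∀ k a, T.length ≤ a + k →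
    ∃ O : Set ℕ, O ⊆ {i | IsOcc T C i ∧ a ≤ i} ∧ O.Finite ∧
      (∀ i ∈ O, ∀ j ∈ O, i < j → i + C.length ≤ j) ∧
      {p | p < T.length ∧ ∃ i, a ≤ i ∧ IsOcc T C i ∧ i ≤ p ∧ p < i + C.length}.ncard
        ≤ 2 * O.ncard * C.length := by
  intro k
  induction k with
  | zero =>
      intro a ha
      refine ⟨∅, by simp, Set.finite_empty, by simp, ?_⟩
      have : {p | p < T.length ∧ ∃ i, a ≤ i ∧ IsOcc T C i ∧ i ≤ p ∧ p < i + C.length} = ∅ := by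
        ext p
        simp only [Set.mem_setOf_eq, Set.mem_empty_iff_false, iff_false, not_and]
        rintro hp ⟨i, hai, _, hip, _⟩
        omega
      simp [this]
  | succ k ih =>
      intro a ha
      classical
      by_cases hne : ∃ i, IsOcc T C i ∧ a ≤ i
      · set i₁ := Nat.find hne with hi₁def
        obtain ⟨hocc1, hai1⟩ := Nat.find_spec hne
        have hmin : ∀ i, IsOcc T C i → a ≤ i → i₁ ≤ i := by
          intro i h1 h2
          exact Nat.find_min' hne ⟨h1, h2⟩
        have hi1T : i₁ + C.length ≤ T.length := hocc1.1
        have hstep : T.length ≤ (i₁ + C.length) + k := by omega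
        obtain ⟨O', hO'sub, hO'fin, hO'no, hO'card⟩ := ih (i₁ + C.length) hstep
        have hnotmem : i₁ ∉ O' := by
          intro h
          have := (hO'sub h).2
          omega
        refine ⟨insert i₁ O', ?_, hO'fin.insert _, ?_, ?_⟩
        · rintro j (rfl | hj)
          · exact ⟨hocc1, hai1⟩
          · exact ⟨(hO'sub hj).1, by have := (hO'sub hj).2; omega⟩
        · rintro i (rfl | hi) j (rfl | hj) hij
          · omega
          · exact (hO'sub hj).2
          · have := (hO'sub hi).2; omega
          · exact hO'no i hi j hj hij
        · -- counting
          set P : Set ℕ :=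
            {p | p < T.length ∧ ∃ i, a ≤ i ∧ IsOcc T C i ∧ i ≤ p ∧ p < i + C.length}
          set P' : Set ℕ :=
            {p | p < T.length ∧ ∃ i, i₁ + C.length ≤ i ∧ IsOcc T C i ∧ i ≤ p ∧ p < i + C.length}
          have hsub : P ⊆ Set.Ico i₁ (i₁ + 2 * C.length) ∪ P' := by
            rintro p ⟨hpT, i, hai, hocc, hip, hpi⟩
            by_cases hsmall : p < i₁ + 2 * C.length
            · left
              have := hmin i hocc hai
              exact ⟨by omega, hsmall⟩
            · right
              refine ⟨hpT, i, by omega, hocc, hip, hpi⟩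
          have hP'fin : P'.Finite :=
            (Set.finite_Iio T.length).subset (fun p hp => hp.1)
          have hfin : (Set.Ico i₁ (i₁ + 2 * C.length) ∪ P').Finite :=
            (Set.finite_Ico _ _).union hP'fin
          calc P.ncard ≤ (Set.Ico i₁ (i₁ + 2 * C.length) ∪ P').ncard :=
                Set.ncard_le_ncard hsub hfin
            _ ≤ (Set.Ico i₁ (i₁ + 2 * C.length)).ncard + P'.ncard :=
                Set.ncard_union_le _ _
            _ ≤ 2 * C.length + 2 * O'.ncard * C.length := by
                have : (Set.Ico i₁ (i₁ + 2 * C.length)).ncard = 2 * C.length := by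
                  rw [← Finset.coe_Ico, Set.ncard_coe_finset, Nat.card_Ico]
                  omega
                omega
            _ = 2 * (insert i₁ O').ncard * C.length := by
                rw [Set.ncard_insert_of_notMem hnotmem hO'fin]
                ring
      · refine ⟨∅, by simp, Set.finite_empty, by simp, ?_⟩
        have : {p | p < T.length ∧ ∃ i, a ≤ i ∧ IsOcc T C i ∧ i ≤ p ∧ p < i + C.length} = ∅ := by
          ext p
          simp only [Set.mem_setOf_eq, Set.mem_empty_iff_false, iff_false, not_and]
          rintro hp ⟨i, hai, hocc, _⟩
          exact hne ⟨i, hocc, hai⟩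
        simp [this]

theorem nonoverlapping_occurrences_cover_half (C T : List α) (hC : C ≠ []) :
    ∃ O : Set ℕ, O ⊆ {i | IsOcc T C i} ∧ O.Finite ∧
      (∀ i ∈ O, ∀ j ∈ O, i < j → i + C.length ≤ j) ∧
      {p | p < T.length ∧ CoveredPos T C p}.ncard ≤ 2 * O.ncard * C.length := by
  have hC' : 0 < C.length := List.length_pos_iff.mpr hC
  obtain ⟨O, hsub, hfin, hno, hcard⟩ := greedy_aux C T hC' T.length 0 (by omega)
  refine ⟨O, fun i hi => (hsub hi).1, hfin, hno, ?_⟩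
  have : {p | p < T.length ∧ CoveredPos T C p} =
      {p | p < T.length ∧ ∃ i, 0 ≤ i ∧ IsOcc T C i ∧ i ≤ p ∧ p < i + C.length} := by
    ext p
    simp [CoveredPos, and_assoc]
  rw [this]
  exact hcard
end

section
/- For strings W, V, T, define Covered_T(X) = |{p : 1 ≤ p ≤ |T| and there exists i ∈ Occ_T(X) with i ≤ p ≤ i+|X|−1}| and Δ_T(X) = 1 + |{i ∈ Occ_T(X) : the successor j of i in Occ_T(X) exists and j − i > |X|}|. Suppose W is a proper prefix of V, both occur in T, Occ_T(W) = Occ_T(V), and every pair of consecutive elements i < j of Occ_T(V) satisfies j − i ≤ |W| or j − i > |V|. If the last occurrence position of V satisfies max(Occ_T(V)) + |V| − 1 ≤ |T|, then Covered_T(W) = Covered_T(V) − (|V| − |W|)·Δ_T(V). -/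
/-!
STATEMENT 16: For strings `W, V, T`, let `Covered_T(X)` be the number of
positions of `T` covered by occurrences of `X`, and let
`Δ_T(X) = 1 + #{i ∈ Occ_T(X) : the successor j of i in Occ_T(X) exists and
j − i > |X|}`.  Suppose `W` is a proper prefix of `V`, both occur in `T`,
`Occ_T(W) = Occ_T(V)`, and every pair of consecutive elements `i < j` of
`Occ_T(V)` satisfies `j − i ≤ |W|` or `j − i > |V|`.  If the last occurrence
position of `V` satisfies `max(Occ_T(V)) + |V| − 1 ≤ |T|` (in 1-based terms;
here, 0-based: every occurrence of `V` fits in `T`), then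
`Covered_T(W) = Covered_T(V) − (|V| − |W|)·Δ_T(V)`.
Strings are modelled as lists; positions are 0-based.  The conclusion is
stated additively, as `Covered_T(W) + (|V| − |W|)·Δ_T(V) = Covered_T(V)`,
to avoid truncated natural subtraction.
-/

open Finset

open scoped Classical in
lemma abstract_cover (v w : ℕ) (hwv : w < v) (S : Finset ℕ) :
    S.Nonempty →
    (∀ i ∈ S, ∀ j ∈ S, i < j → (∀ k ∈ S, ¬(i < k ∧ k < j)) → j - i ≤ w ∨ v < j - i) →
    (S.biUnion fun i => Ico i (i + w)).card
      + (v - w) * (1 + (S.filter fun i => ∃ j ∈ S, i < j ∧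
          (∀ k ∈ S, ¬(i < k ∧ k < j)) ∧ v < j - i).card)
      = (S.biUnion fun i => Ico i (i + v)).card := by
  induction S using Finset.strongInduction with
  | _ S ih =>
    intro hS hcons
    set m := S.max' hS with hm
    have hmS : m ∈ S := S.max'_mem hS
    have hSkm : ∀ k ∈ S, k ≤ m := fun k hk => S.le_max' k hk
    by_cases h' : (S.erase m).Nonempty
    · set S' := S.erase m with hS'def
      set m' := S'.max' h' with hm'
      have hm'S' : m' ∈ S' := S'.max'_mem h'
      have hm'S : m' ∈ S := Finset.mem_of_mem_erase hm'S'
      have hm'm : m' < m :=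
        lt_of_le_of_ne (S.le_max' _ hm'S) (Finset.ne_of_mem_erase hm'S')
      have hbound : ∀ k ∈ S', k ≤ m' := fun k hk => S'.le_max' k hk
      have hmem : ∀ k ∈ S, k ≠ m → k ∈ S' := fun k hk hne => Finset.mem_erase.2 ⟨hne, hk⟩
      have hconsec : ∀ k ∈ S, ¬(m' < k ∧ k < m) := by
        rintro k hk ⟨h1, h2⟩
        exact absurd (hbound k (hmem k hk (Nat.ne_of_lt h2))) (not_le.2 h1)
      have hgap := hcons m' hm'S m hmS hm'm hconsec
      have hins : S = insert m S' := by rw [hS'def]; exact (Finset.insert_erase hmS).symm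
      have hmnot : m ∉ S' := Finset.notMem_erase m S
      -- card of biUnion, generic in the gap case
      have keyChain : ∀ x : ℕ, m ≤ m' + x →
          (S.biUnion fun i => Ico i (i + x)).card + (m' + x - m)
            = (S'.biUnion fun i => Ico i (i + x)).card + x := by
        intro x hx
        have hint : Ico m (m + x) ∩ S'.biUnion (fun i => Ico i (i + x)) = Ico m (m' + x) := by
          ext p
          simp only [Finset.mem_inter, Finset.mem_Ico, Finset.mem_biUnion]
          constructor
          · rintro ⟨⟨h1, h2⟩, i, hi, h3, h4⟩
            exact ⟨h1, lt_of_lt_of_le h4 (by have := hbound i hi; omega)⟩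
          · rintro ⟨h1, h2⟩
            exact ⟨⟨h1, by omega⟩, m', hm'S', by omega, h2⟩
        have hcu := Finset.card_union_add_card_inter (Ico m (m + x))
          (S'.biUnion (fun i => Ico i (i + x)))
        rw [hint] at hcu
        rw [hins, Finset.biUnion_insert]
        simp only [Nat.card_Ico] at hcu ⊢
        omega
      have keyDisj : v < m - m' → ∀ x : ℕ, x ≤ v →
          (S.biUnion fun i => Ico i (i + x)).card
            = (S'.biUnion fun i => Ico i (i + x)).card + x := by
        intro hd x hx
        have hint : Ico m (m + x) ∩ S'.biUnion (fun i => Ico i (i + x)) = ∅ := by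
          apply Finset.eq_empty_of_forall_notMem
          intro p hp
          simp only [Finset.mem_inter, Finset.mem_Ico, Finset.mem_biUnion] at hp
          obtain ⟨⟨h1, h2⟩, i, hi, h3, h4⟩ := hp
          have := hbound i hi
          omega
        have hcu := Finset.card_union_add_card_inter (Ico m (m + x))
          (S'.biUnion (fun i => Ico i (i + x)))
        rw [hint] at hcu
        rw [hins, Finset.biUnion_insert]
        simp only [Nat.card_Ico, Finset.card_empty] at hcu ⊢
        omega
      -- the predicate facts
      have hPm : ¬ (∃ j ∈ S, m < j ∧ (∀ k ∈ S, ¬(m < k ∧ k < j)) ∧ v < j - m) := by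
        rintro ⟨j, hj, hlt, -⟩
        exact absurd (hSkm j hj) (not_le.2 hlt)
      have hPm' : (∃ j ∈ S, m' < j ∧ (∀ k ∈ S, ¬(m' < k ∧ k < j)) ∧ v < j - m') ↔
          v < m - m' := by
        constructor
        · rintro ⟨j, hj, h1, h2, h3⟩
          have hjm : j = m := by
            by_contra hne
            exact absurd (hbound j (hmem j hj hne)) (not_le.2 h1)
          omega
        · intro h
          exact ⟨m, hmS, hm'm, hconsec, h⟩
      have hPlow : ∀ i ∈ S', i < m' →
          ((∃ j ∈ S, i < j ∧ (∀ k ∈ S, ¬(i < k ∧ k < j)) ∧ v < j - i) ↔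
           (∃ j ∈ S', i < j ∧ (∀ k ∈ S', ¬(i < k ∧ k < j)) ∧ v < j - i)) := by
        intro i hiS' hilt
        constructor
        · rintro ⟨j, hj, h1, h2, h3⟩
          have hjne : j ≠ m := by
            intro hjm
            exact h2 m' hm'S ⟨hilt, hjm ▸ hm'm⟩
          exact ⟨j, hmem j hj hjne, h1, fun k hk => h2 k (Finset.mem_of_mem_erase hk), h3⟩
        · rintro ⟨j, hj, h1, h2, h3⟩
          refine ⟨j, Finset.mem_of_mem_erase hj, h1, ?_, h3⟩
          rintro k hk ⟨hk1, hk2⟩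
          have hkne : k ≠ m := by
            have := hbound j hj
            omega
          exact h2 k (hmem k hk hkne) ⟨hk1, hk2⟩
      have hP'm' : ¬ (∃ j ∈ S', m' < j ∧ (∀ k ∈ S', ¬(m' < k ∧ k < j)) ∧ v < j - m') := by
        rintro ⟨j, hj, hlt, -⟩
        exact absurd (hbound j hj) (not_le.2 hlt)
      -- hypotheses for the induction
      have hssub : S' ⊂ S := Finset.erase_ssubset hmS
      have hcons' : ∀ i ∈ S', ∀ j ∈ S', i < j → (∀ k ∈ S', ¬(i < k ∧ k < j)) →
          j - i ≤ w ∨ v < j - i := by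
        intro i hi j hj hij hnk
        refine hcons i (Finset.mem_of_mem_erase hi) j (Finset.mem_of_mem_erase hj) hij ?_
        rintro k hk ⟨hk1, hk2⟩
        have hkne : k ≠ m := by
          have := hbound j hj
          omega
        exact hnk k (hmem k hk hkne) ⟨hk1, hk2⟩
      have IH := ih S' hssub h' hcons'
      rcases hgap with hchain | hdisj
      · -- chained case: m - m' ≤ w
        have hDeq : (S.filter fun i => ∃ j ∈ S, i < j ∧
            (∀ k ∈ S, ¬(i < k ∧ k < j)) ∧ v < j - i)
            = S'.filter fun i => ∃ j ∈ S', i < j ∧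
            (∀ k ∈ S', ¬(i < k ∧ k < j)) ∧ v < j - i := by
          ext i
          simp only [Finset.mem_filter]
          constructor
          · rintro ⟨hiS, hP⟩
            rcases eq_or_ne i m with rfl | hne
            · exact absurd hP hPm
            have hiS' : i ∈ S' := hmem i hiS hne
            rcases eq_or_ne i m' with rfl | hne'
            · exact absurd (hPm'.1 hP) (by omega)
            · exact ⟨hiS', (hPlow i hiS' (lt_of_le_of_ne (hbound i hiS') hne')).1 hP⟩
          · rintro ⟨hiS', hP'⟩
            have hiS := Finset.mem_of_mem_erase hiS'
            rcases eq_or_ne i m' with rfl | hne'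
            · exact absurd hP' hP'm'
            · exact ⟨hiS, (hPlow i hiS' (lt_of_le_of_ne (hbound i hiS') hne')).2 hP'⟩
        have kw := keyChain w (by omega)
        have kv := keyChain v (by omega)
        rw [hDeq]
        omega
      · -- disjoint case: v < m - m'
        have hDeq : (S.filter fun i => ∃ j ∈ S, i < j ∧
            (∀ k ∈ S, ¬(i < k ∧ k < j)) ∧ v < j - i)
            = insert m' (S'.filter fun i => ∃ j ∈ S', i < j ∧
            (∀ k ∈ S', ¬(i < k ∧ k < j)) ∧ v < j - i) := by
          ext i
          simp only [Finset.mem_filter, Finset.mem_insert]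
          constructor
          · rintro ⟨hiS, hP⟩
            rcases eq_or_ne i m with rfl | hne
            · exact absurd hP hPm
            have hiS' : i ∈ S' := hmem i hiS hne
            rcases eq_or_ne i m' with rfl | hne'
            · exact Or.inl rfl
            · exact Or.inr ⟨hiS',
                (hPlow i hiS' (lt_of_le_of_ne (hbound i hiS') hne')).1 hP⟩
          · rintro (rfl | ⟨hiS', hP'⟩)
            · exact ⟨hm'S, hPm'.2 hdisj⟩
            have hiS := Finset.mem_of_mem_erase hiS'
            rcases eq_or_ne i m' with rfl | hne'
            · exact absurd hP' hP'm'
            · exact ⟨hiS, (hPlow i hiS' (lt_of_le_of_ne (hbound i hiS') hne')).2 hP'⟩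
        have hm'notin : m' ∉ (S'.filter fun i => ∃ j ∈ S', i < j ∧
            (∀ k ∈ S', ¬(i < k ∧ k < j)) ∧ v < j - i) := by
          simp only [Finset.mem_filter]
          rintro ⟨-, hP'⟩
          exact hP'm' hP'
        have hcardD : (S.filter fun i => ∃ j ∈ S, i < j ∧
            (∀ k ∈ S, ¬(i < k ∧ k < j)) ∧ v < j - i).card
            = (S'.filter fun i => ∃ j ∈ S', i < j ∧
            (∀ k ∈ S', ¬(i < k ∧ k < j)) ∧ v < j - i).card + 1 := by
          rw [hDeq, Finset.card_insert_of_notMem hm'notin]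
        have kw := keyDisj hdisj w (by omega)
        have kv := keyDisj hdisj v le_rfl
        rw [hcardD, kw, kv]
        set d := (S'.filter fun i => ∃ j ∈ S', i < j ∧
            (∀ k ∈ S', ¬(i < k ∧ k < j)) ∧ v < j - i).card
        have hexp : (v - w) * (1 + (d + 1)) = (v - w) * (1 + d) + (v - w) := by ring
        omega
    · -- S = {m}
      have hSm : S = {m} := by
        rcases (Finset.erase_eq_empty_iff S m).mp (not_nonempty_iff_eq_empty.mp h') with h | h
        · exact absurd h (Finset.nonempty_iff_ne_empty.mp hS)
        · exact h
      rw [hSm]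
      have hfil : ({m} : Finset ℕ).filter (fun i => ∃ j ∈ ({m} : Finset ℕ), i < j ∧
          (∀ k ∈ ({m} : Finset ℕ), ¬(i < k ∧ k < j)) ∧ v < j - i) = ∅ := by
        apply Finset.filter_false_of_mem
        intro i hi
        simp only [Finset.mem_singleton] at hi
        subst hi
        rintro ⟨j, hj, hlt, -⟩
        simp only [Finset.mem_singleton] at hj
        omega
      rw [hfil]
      simp [Nat.card_Ico]
      omega

variable {α : Type*}

/-- The set of (0-based) starting positions of occurrences of `X` in `T`. -/
def Occ (T X : List α) : Set ℕ := {i | IsOcc T X i}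

theorem cst_edge_covered_positions (W V T : List α)
    (hpref : W <+: V) (hproper : W.length < V.length)
    (hWocc : ∃ i, i ∈ Occ T W) (hVocc : ∃ i, i ∈ Occ T V)
    (heq : Occ T W = Occ T V)
    (hcons : ∀ i ∈ Occ T V, ∀ j ∈ Occ T V, i < j →
      (∀ k ∈ Occ T V, ¬(i < k ∧ k < j)) →
      j - i ≤ W.length ∨ V.length < j - i)
    (hlast : ∀ i ∈ Occ T V, i + V.length ≤ T.length) :
    {p | p < T.length ∧ CoveredPos T W p}.ncard +
      (V.length - W.length) *
        (1 + {i | i ∈ Occ T V ∧ ∃ j ∈ Occ T V, i < j ∧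
          (∀ k ∈ Occ T V, ¬(i < k ∧ k < j)) ∧ V.length < j - i}.ncard) =
      {p | p < T.length ∧ CoveredPos T V p}.ncard := by
  classical
  have hVpos : 0 < V.length := lt_of_le_of_lt (Nat.zero_le _) hproper
  have hfin : (Occ T V).Finite := by
    apply Set.Finite.subset (Set.finite_Iio T.length)
    intro i hi
    have := hi.1
    simp only [Set.mem_Iio]
    omega
  set S : Finset ℕ := hfin.toFinset with hSdef
  have hSmem : ∀ i, i ∈ S ↔ IsOcc T V i := by
    intro i; rw [hSdef, Set.Finite.mem_toFinset]; rfl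
  have hS : S.Nonempty := by
    obtain ⟨i, hi⟩ := hVocc
    exact ⟨i, (hSmem i).2 hi⟩
  have hWiff : ∀ i, IsOcc T W i ↔ i ∈ S := by
    intro i
    rw [hSmem]
    constructor
    · intro h; exact Set.ext_iff.1 heq i |>.1 h
    · intro h; exact Set.ext_iff.1 heq i |>.2 h
  -- covered sets as finsets
  have hCW : {p | p < T.length ∧ CoveredPos T W p}
      = ↑(S.biUnion fun i => Finset.Ico i (i + W.length)) := by
    ext p
    simp only [Set.mem_setOf_eq, Finset.coe_biUnion, Set.mem_iUnion, Finset.mem_coe,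
      Finset.mem_Ico]
    constructor
    · rintro ⟨-, i, hocc, h1, h2⟩
      exact ⟨i, (hWiff i).1 hocc, h1, h2⟩
    · rintro ⟨i, hi, h1, h2⟩
      have hocc : IsOcc T W i := (hWiff i).2 hi
      exact ⟨by have := hocc.1; omega, i, hocc, h1, h2⟩
  have hCV : {p | p < T.length ∧ CoveredPos T V p}
      = ↑(S.biUnion fun i => Finset.Ico i (i + V.length)) := by
    ext p
    simp only [Set.mem_setOf_eq, Finset.coe_biUnion, Set.mem_iUnion, Finset.mem_coe,
      Finset.mem_Ico]
    constructor
    · rintro ⟨-, i, hocc, h1, h2⟩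
      exact ⟨i, (hSmem i).2 hocc, h1, h2⟩
    · rintro ⟨i, hi, h1, h2⟩
      have hocc : IsOcc T V i := (hSmem i).1 hi
      exact ⟨by have := hocc.1; omega, i, hocc, h1, h2⟩
  have hD : {i | i ∈ Occ T V ∧ ∃ j ∈ Occ T V, i < j ∧
          (∀ k ∈ Occ T V, ¬(i < k ∧ k < j)) ∧ V.length < j - i}
      = ↑(S.filter fun i => ∃ j ∈ S, i < j ∧
          (∀ k ∈ S, ¬(i < k ∧ k < j)) ∧ V.length < j - i) := by
    ext i
    simp only [Set.mem_setOf_eq, Finset.coe_filter]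
    constructor
    · rintro ⟨hi, j, hj, h1, h2, h3⟩
      exact ⟨(hSmem i).2 hi, j, (hSmem j).2 hj, h1,
        fun k hk => h2 k ((hSmem k).1 hk), h3⟩
    · rintro ⟨hi, j, hj, h1, h2, h3⟩
      exact ⟨(hSmem i).1 hi, j, (hSmem j).1 hj, h1,
        fun k hk => h2 k ((hSmem k).2 hk), h3⟩
  rw [hCW, hCV, hD, Set.ncard_coe_finset, Set.ncard_coe_finset, Set.ncard_coe_finset]
  have habs := abstract_cover V.length W.length hproper S hS
    (fun i hi j hj hij hnk => hcons i ((hSmem i).1 hi) j ((hSmem j).1 hj) hij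
      (fun k hk => hnk k ((hSmem k).2 hk)))
  convert habs using 4
end

section
/- Let L ≥ 1 and let A be a finite set of positive integers with |A| ≥ 2. Partition the positive integers into blocks B_r = {(r−1)L+1, …, rL} for r ≥ 1, and let A' be the set consisting of min(A ∩ B_r) and max(A ∩ B_r) for every r with A ∩ B_r ≠ ∅. Then max(maxgap(A), L) = max(maxgap(A'), L); in particular, if maxgap(A) > L then maxgap(A') = maxgap(A). -/
/-!
STATEMENT 18: Let `L ≥ 1` and let `A` be a finite set of positive integers
with `|A| ≥ 2`.  Partition the positive integers into blocks
`B_r = {(r−1)L+1, …, rL}` for `r ≥ 1`, and let `A'` be the set consisting of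
`min(A ∩ B_r)` and `max(A ∩ B_r)` for every `r` with `A ∩ B_r ≠ ∅`.  Then
`max(maxgap A, L) = max(maxgap A', L)`; in particular, if `maxgap A > L`
then `maxgap A' = maxgap A`.

Formalization notes: a positive integer `x` lies in block `B_r` exactly when
`(x − 1) / L = r − 1` (natural division), so `x, y ≥ 1` lie in the same block
iff `(x − 1) / L = (y − 1) / L`.  Hence `A'` is the set of elements of `A`
that are minimal or maximal among the elements of `A` in their own block.
For a finite set `A ⊆ ℕ` with at least two elements, `maxgap A` is the
maximum difference between consecutive elements of `A`, realized as the
supremum of the differences `b − a` over pairs `a < b` of elements of `A`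
with no element of `A` strictly between them.
-/

/-- Maximum gap between consecutive elements of a set of naturals. -/
noncomputable def maxgap (A : Set ℕ) : ℕ :=
  sSup {d | ∃ a ∈ A, ∃ b ∈ A, a < b ∧ (∀ c ∈ A, ¬(a < c ∧ c < b)) ∧ d = b - a}

theorem maxgap_from_block_extrema (L : ℕ) (hL : 1 ≤ L)
    (A : Set ℕ) (hfin : A.Finite) (hpos : ∀ x ∈ A, 1 ≤ x) (hcard : 2 ≤ A.ncard)
    (A' : Set ℕ)
    (hA' : A' = {x ∈ A | (∀ y ∈ A, (y - 1) / L = (x - 1) / L → x ≤ y) ∨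
      (∀ y ∈ A, (y - 1) / L = (x - 1) / L → y ≤ x)}) :
    max (maxgap A) L = max (maxgap A') L ∧
      (L < maxgap A → maxgap A' = maxgap A) := by
  have key : ∀ x y : ℕ, y / L = x / L → y - x < L := by
    intro x y h
    have e1 : L * (x / L) + x % L = x := Nat.div_add_mod x L
    have e2 : L * (y / L) + y % L = y := Nat.div_add_mod y L
    have m1 : x % L < L := Nat.mod_lt _ hL
    have m2 : y % L < L := Nat.mod_lt _ hL
    rw [h] at e2
    generalize L * (x / L) = t at e1 e2
    generalize x % L = rx at e1 m1
    generalize y % L = ry at e2 m2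
    omega
  have hA'sub : A' ⊆ A := by
    intro x hx; rw [hA'] at hx; exact hx.1
  obtain ⟨N, hN⟩ := hfin.bddAbove
  have hbddA : BddAbove {d | ∃ a ∈ A, ∃ b ∈ A, a < b ∧
      (∀ c ∈ A, ¬(a < c ∧ c < b)) ∧ d = b - a} := by
    refine ⟨N, ?_⟩
    rintro d ⟨a, ha, b, hb, hab, hc, rfl⟩
    exact le_trans (Nat.sub_le _ _) (hN hb)
  have hbddA' : BddAbove {d | ∃ a ∈ A', ∃ b ∈ A', a < b ∧
      (∀ c ∈ A', ¬(a < c ∧ c < b)) ∧ d = b - a} := by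
    refine ⟨N, ?_⟩
    rintro d ⟨a, ha, b, hb, hab, hc, rfl⟩
    exact le_trans (Nat.sub_le _ _) (hN (hA'sub hb))
  have h1 : maxgap A ≤ max (maxgap A') L := by
    unfold maxgap
    refine csSup_le' ?_
    rintro d ⟨a, ha, b, hb, hab, hcons, rfl⟩
    by_cases hsame : (b - 1) / L = (a - 1) / L
    · have hk := key (a - 1) (b - 1) hsame
      have ha1 := hpos a ha
      exact le_max_of_le_right (by omega)
    · have haA' : a ∈ A' := by
        rw [hA']
        refine ⟨ha, Or.inr fun y hy hyq => ?_⟩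
        by_contra hlt
        push_neg at hlt
        have hyb : y < b := by
          by_contra hge
          push_neg at hge
          have hd1 : (a - 1) / L ≤ (b - 1) / L := Nat.div_le_div_right (by omega)
          have hd2 : (b - 1) / L ≤ (y - 1) / L := Nat.div_le_div_right (by omega)
          exact hsame (le_antisymm (hd2.trans hyq.le) hd1)
        exact hcons y hy ⟨hlt, hyb⟩
      have hbA' : b ∈ A' := by
        rw [hA']
        refine ⟨hb, Or.inl fun y hy hyq => ?_⟩
        by_contra hlt
        push_neg at hlt
        have hay : a < y := by
          by_contra hge
          push_neg at hge
          have hd1 : (y - 1) / L ≤ (a - 1) / L := Nat.div_le_div_right (by omega)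
          have hd2 : (a - 1) / L ≤ (b - 1) / L := Nat.div_le_div_right (by omega)
          exact hsame (le_antisymm (by rw [← hyq]; exact hd1) hd2)
        exact hcons y hy ⟨hay, hlt⟩
      have hmem : b - a ∈ {d | ∃ a ∈ A', ∃ b ∈ A', a < b ∧
          (∀ c ∈ A', ¬(a < c ∧ c < b)) ∧ d = b - a} :=
        ⟨a, haA', b, hbA', hab, fun c hc => hcons c (hA'sub hc), rfl⟩
      exact le_max_of_le_left (le_csSup hbddA' hmem)
  have h2 : maxgap A' ≤ max (maxgap A) L := by
    unfold maxgap
    refine csSup_le' ?_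
    rintro d ⟨a, ha, b, hb, hab, hcons, rfl⟩
    by_cases hmid : ∃ c ∈ A, a < c ∧ c < b
    · obtain ⟨c, hc, hac, hcb⟩ := hmid
      set S : Set ℕ := {y | y ∈ A ∧ (y - 1) / L = (c - 1) / L} with hS
      have hSc : c ∈ S := ⟨hc, rfl⟩
      have hSne : S.Nonempty := ⟨c, hSc⟩
      have hSsub : S ⊆ A := fun y hy => hy.1
      have hSbdd : BddAbove S := ⟨N, fun y hy => hN (hSsub hy)⟩
      set m := sInf S with hm
      set M := sSup S with hM
      have hmS : m ∈ S := Nat.sInf_mem hSne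
      have hMS : M ∈ S := Nat.sSup_mem hSne hSbdd
      have hmA' : m ∈ A' := by
        rw [hA']
        exact ⟨hmS.1, Or.inl fun y hy hyq => Nat.sInf_le ⟨hy, by rw [hyq, hmS.2]⟩⟩
      have hMA' : M ∈ A' := by
        rw [hA']
        exact ⟨hMS.1, Or.inr fun y hy hyq => le_csSup hSbdd ⟨hy, by rw [hyq, hMS.2]⟩⟩
      have hmc : m ≤ c := Nat.sInf_le hSc
      have hcM : c ≤ M := le_csSup hSbdd hSc
      have hma : m ≤ a := by
        by_contra h
        push_neg at h
        exact hcons m hmA' ⟨h, lt_of_le_of_lt hmc hcb⟩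
      have hbM : b ≤ M := by
        by_contra h
        push_neg at h
        exact hcons M hMA' ⟨lt_of_lt_of_le hac hcM, h⟩
      have hsame : (M - 1) / L = (m - 1) / L := by rw [hMS.2, hmS.2]
      have hk := key (m - 1) (M - 1) hsame
      have hm1 := hpos m hmS.1
      exact le_max_of_le_right (by omega)
    · push_neg at hmid
      have hmem : b - a ∈ {d | ∃ a ∈ A, ∃ b ∈ A, a < b ∧
          (∀ c ∈ A, ¬(a < c ∧ c < b)) ∧ d = b - a} :=
        ⟨a, hA'sub ha, b, hA'sub hb, hab,
          fun c hc hcc => absurd hcc.2 (not_lt.mpr (hmid c hc hcc.1)), rfl⟩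
      exact le_max_of_le_left (le_csSup hbddA hmem)
  have heq : max (maxgap A) L = max (maxgap A') L :=
    le_antisymm (max_le h1 (le_max_right _ _)) (max_le h2 (le_max_right _ _))
  refine ⟨heq, fun hlt => ?_⟩
  have h3 : max (maxgap A') L = maxgap A := by
    rw [← heq]; exact max_eq_left hlt.le
  rcases le_or_gt (maxgap A') L with h | h
  · rw [max_eq_right h] at h3; omega
  · rw [max_eq_left h.le] at h3; exact h3
end

section
/- Let T be a string of length n, let x ≥ 1, and let p be a position with 2x − 1 ≤ p and p + 2x − 2 ≤ n. Suppose p lies within the leftmost occurrence of some substring of T of length 2x − 1, i.e., there is a position q with q ≤ p ≤ q + 2x − 2 such that T[q, q+2x−2] does not occur in T at any position smaller than q. Then the substring W = T[p−2x+2, p+2x−2] of length 4x − 3 does not occur in T at any position smaller than p − 2x + 2 (i.e., p is the middle letter of the leftmost occurrence of W). -/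
/-!
STATEMENT 19: Let `T` be a string of length `n`, let `x ≥ 1`, and let `p` be
a position with `2x − 1 ≤ p` and `p + 2x − 2 ≤ n`.  Suppose `p` lies within
the leftmost occurrence of some substring of `T` of length `2x − 1`, i.e.
there is a position `q` with `q ≤ p ≤ q + 2x − 2` such that `T[q, q+2x−2]`
does not occur in `T` at any position smaller than `q`.  Then the substring
`W = T[p−2x+2, p+2x−2]` of length `4x − 3` does not occur in `T` at any
position smaller than `p − 2x + 2` (i.e. `p` is the middle letter of the
leftmost occurrence of `W`).

Formalization notes: positions `p, q, r` are 1-based, as in the paper; the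
substring `T[q, q+2x−2]` of length `2x−1` is `(T.drop (q−1)).take (2x−1)`,
and "`X` occurs at (1-based) position `r`" is `IsOcc T X (r−1)` with the
0-based predicate `IsOcc`.  The 1-based position `p−2x+2` is written
`p − (2x − 2)` to avoid truncated natural subtraction.
-/

variable {α : Type*}

/-- If the length-`L` windows of `T` at `i` and `s` agree, then so do the
length-`m` sub-windows at offset `d`, provided `d + m ≤ L`. -/
lemma window_sub (T : List α) (i s L d m : ℕ) (hdm : d + m ≤ L)
    (h : (T.drop i).take L = (T.drop s).take L) :
    (T.drop (i + d)).take m = (T.drop (s + d)).take m := by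
  have key : ∀ u : ℕ, (T.drop (u + d)).take m =
      (((T.drop u).take L).drop d).take m := by
    intro u
    rw [List.drop_take, List.take_take, List.drop_drop,
      min_eq_left (by omega : m ≤ L - d)]
  rw [key i, key s, h]

theorem marked_position_is_middle_of_first_occurrence (T : List α)
    (n x p : ℕ) (hn : n = T.length) (hx : 1 ≤ x)
    (hp1 : 2 * x - 1 ≤ p) (hp2 : p + (2 * x - 2) ≤ n)
    (hmark : ∃ q, 1 ≤ q ∧ q ≤ p ∧ p ≤ q + (2 * x - 2) ∧ q + (2 * x - 2) ≤ n ∧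
      ∀ r, 1 ≤ r → r < q →
        ¬ IsOcc T ((T.drop (q - 1)).take (2 * x - 1)) (r - 1)) :
    ∀ r, 1 ≤ r → r < p - (2 * x - 2) →
      ¬ IsOcc T ((T.drop (p - (2 * x - 2) - 1)).take (4 * x - 3)) (r - 1) := by
  intro r hr hrlt hocc
  obtain ⟨q, hq1, hq2, hq3, hq4, hfirst⟩ := hmark
  set s : ℕ := p - (2 * x - 2) - 1 with hs_def
  have hs : s = p - (2 * x - 1) := by omega
  have hWlen : ((T.drop s).take (4 * x - 3)).length = 4 * x - 3 := by
    simp only [List.length_take, List.length_drop]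
    omega
  obtain ⟨hlen, heq⟩ := hocc
  rw [hWlen] at hlen heq
  -- offset of the `q`-window inside `W`
  set d : ℕ := (q - 1) - s with hd_def
  have hsd : s + d = q - 1 := by omega
  have hmain := window_sub T (r - 1) s (4 * x - 3) d (2 * x - 1)
    (by omega) heq
  have hClen : ((T.drop (q - 1)).take (2 * x - 1)).length = 2 * x - 1 := by
    simp only [List.length_take, List.length_drop]
    omega
  refine hfirst (r + d) (by omega) (by omega) ⟨?_, ?_⟩
  · rw [hClen]; omega
  · rw [hClen]
    have e1 : r + d - 1 = r - 1 + d := by omega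
    rw [e1, ← hsd]
    exact hmain
end
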